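/- arXiv:0806.4721 — 2 statements merged into one kernel-verified Lean document; each statement's English description precedes it below -/
import Mathlib

section
/- The dehomogenized Motzkin polynomial 1 + x₁⁴x₂² + x₁²x₂⁴ - 3x₁²x₂² is nonnegative on ℝ² but is not a sum of squares of polynomials. -/
/-!
Suppose `M = ∑ qᵢ²`, so that `qᵢ² ≤ M` pointwise. Restricting to lines through the
origin, a squared univariate polynomial cannot be dominated by one of smaller degree, hence
`deg qᵢ ≤ 3`; and since `M = 1` on both coordinate axes, `qᵢ` has no monomial `xⁿ` or `yⁿ`
with `n > 0`. So every `qᵢ` is supported on `1, xy, x²y, xy²`, the only way to reach `x²y²`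
in `qᵢ²` is `(xy)²`, and the coefficient of `x²y²` in `∑ qᵢ²` is `∑ (coeff_{xy} qᵢ)² ≥ 0`,
not `-3`.
-/

open MvPolynomial

theorem IsSumSq.map {R S F : Type*} [NonAssocSemiring R] [NonAssocSemiring S] [FunLike F R S]
    [RingHomClass F R S] (f : F) {s : R} (hs : IsSumSq s) : IsSumSq (f s) := by
  induction hs with
  | zero => rw [map_zero]; exact .zero
  | sq_add a _ ih => rw [map_add, map_mul]; exact .sq_add _ ih

namespace Polynomial

theorem two_mul_natDegree_le_of_sq_eval_le {r s : ℝ[X]} (h : ∀ t, r.eval t ^ 2 ≤ s.eval t) :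
    2 * r.natDegree ≤ s.natDegree := by
  by_contra! hlt
  have hdeg : s.degree < (r ^ 2).degree := by
    apply degree_lt_degree
    rwa [natDegree_pow]
  have hpos : 0 < (r ^ 2 - s).degree := by
    rw [degree_sub_eq_left_of_degree_lt hdeg, ← natDegree_pos_iff_degree_pos, natDegree_pow]
    omega
  have hlead : 0 ≤ (r ^ 2 - s).leadingCoeff := by
    rw [leadingCoeff_sub_of_degree_lt hdeg, leadingCoeff_pow]
    positivity
  obtain ⟨t, ht⟩ :=
    ((tendsto_atTop_of_leadingCoeff_nonneg _ hpos hlead).eventually_gt_atTop 0).exists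
  rw [eval_sub, eval_pow] at ht
  linarith [h t]

end Polynomial

namespace MvPolynomial

section CommSemiring

variable {σ R : Type*} [CommSemiring R]

noncomputable def restrictToLine (w : σ → R) : MvPolynomial σ R →ₐ[R] Polynomial R :=
  aeval fun i => Polynomial.C (w i) * Polynomial.X

theorem eval_restrictToLine (w : σ → R) (q : MvPolynomial σ R) (t : R) :
    (restrictToLine w q).eval t = eval (t • w) q := by
  induction q using MvPolynomial.induction_on with
  | C a => simp [restrictToLine]
  | add p q hp hq => simp [hp, hq]
  | mul_X p i hp => simp [restrictToLine, ← hp, mul_comm (w i)]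

theorem restrictToLine_monomial (w : σ → R) (d : σ →₀ ℕ) (a : R) :
    restrictToLine w (monomial d a) =
      Polynomial.C (eval w (monomial d a)) * Polynomial.X ^ d.degree := by
  simp only [restrictToLine, aeval_monomial, eval_monomial, Polynomial.algebraMap_eq, mul_pow,
    Finsupp.prod, ← Polynomial.C_pow, Finset.prod_mul_distrib, Finset.prod_pow_eq_pow_sum,
    Finsupp.degree_apply, map_mul, map_prod, mul_assoc]

theorem coeff_restrictToLine (w : σ → R) (q : MvPolynomial σ R) (n : ℕ) :
    (restrictToLine w q).coeff n = eval w (homogeneousComponent n q) := by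
  classical
  conv_lhs => rw [q.as_sum]
  simp only [map_sum, restrictToLine_monomial, Polynomial.finsetSum_coeff,
    Polynomial.coeff_C_mul_X_pow, homogeneousComponent_apply, Finset.sum_filter]
  refine Finset.sum_congr rfl fun d _ => ?_
  split_ifs <;> simp_all [eq_comm]

theorem natDegree_restrictToLine_le (w : σ → R) (q : MvPolynomial σ R) :
    (restrictToLine w q).natDegree ≤ q.totalDegree :=
  Polynomial.natDegree_le_iff_coeff_eq_zero.mpr fun n hn => by
    rw [coeff_restrictToLine, homogeneousComponent_eq_zero _ _ (by exact_mod_cast hn), map_zero]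

theorem eval_piSingle_one_homogeneousComponent [DecidableEq σ] (i : σ) (n : ℕ)
    (q : MvPolynomial σ R) :
    eval (Pi.single i 1) (homogeneousComponent n q) = coeff (Finsupp.single i n) q := by
  rw [homogeneousComponent_apply, map_sum, Finset.sum_eq_single (Finsupp.single i n)]
  · simp [eval_monomial]
  · intro d hd hne
    rw [Finset.mem_filter] at hd
    obtain ⟨j, hji, hj⟩ : ∃ j ≠ i, d j ≠ 0 := by
      by_contra! h
      have hd_single : d = Finsupp.single i (d i) := by
        ext j
        by_cases hji : j = i
        · simp [hji]
        · simp [hji, h j hji]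
      rw [hd_single, Finsupp.degree_single] at hd
      exact hne (hd.2 ▸ hd_single)
    rw [eval_monomial, Finsupp.prod, Finset.prod_eq_zero (Finsupp.mem_support_iff.mpr hj)
      (by simp [hji, hj]), mul_zero]
  · intro h
    simp_all

theorem homogeneousComponent_totalDegree_ne_zero {q : MvPolynomial σ R} (hq : q ≠ 0) :
    homogeneousComponent q.totalDegree q ≠ 0 := by
  obtain ⟨m, hm, hmax⟩ :=
    Finset.exists_mem_eq_sup q.support (support_nonempty.mpr hq) fun m => m.degree
  have hdeg : m.degree = q.totalDegree := hmax.symm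
  intro h0
  have := coeff_homogeneousComponent (n := q.totalDegree) (φ := q) m
  rw [h0, coeff_zero, if_pos hdeg] at this
  exact mem_support_iff.mp hm this.symm

theorem coeff_mul_self_eq_sq {q : MvPolynomial σ R} {m n : σ →₀ ℕ} (hn : n + n = m)
    (h : ∀ a ∈ q.support, ∀ b ∈ q.support, a + b = m → a = n) :
    coeff m (q * q) = coeff n q ^ 2 := by
  classical
  rw [coeff_mul, Finset.sum_eq_single (n, n), sq]
  · rintro ⟨a, b⟩ hab hne
    rw [Finset.HasAntidiagonal.mem_antidiagonal] at hab
    by_cases ha : a ∈ q.support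
    · by_cases hb : b ∈ q.support
      · exact absurd (Prod.ext (h a ha b hb hab) (h b hb a ha (add_comm b a ▸ hab))) hne
      · rw [notMem_support_iff.mp hb, mul_zero]
    · rw [notMem_support_iff.mp ha, zero_mul]
  · exact fun hnn => absurd (Finset.HasAntidiagonal.mem_antidiagonal.mpr hn) hnn

end CommSemiring

section Real

variable {σ : Type*}

theorem two_mul_totalDegree_le_of_sq_eval_le {q p : MvPolynomial σ ℝ}
    (h : ∀ z, eval z q ^ 2 ≤ eval z p) : 2 * q.totalDegree ≤ p.totalDegree := by
  obtain rfl | hq := eq_or_ne q 0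
  · simp
  obtain ⟨w, hw⟩ : ∃ w, eval w (homogeneousComponent q.totalDegree q) ≠ 0 := by
    by_contra! h0
    exact homogeneousComponent_totalDegree_ne_zero hq (funext fun z => by simp [h0])
  have hline : q.totalDegree ≤ (restrictToLine w q).natDegree :=
    Polynomial.le_natDegree_of_ne_zero (by rwa [coeff_restrictToLine])
  calc 2 * q.totalDegree ≤ 2 * (restrictToLine w q).natDegree := by omega
    _ ≤ (restrictToLine w p).natDegree :=
      Polynomial.two_mul_natDegree_le_of_sq_eval_le fun t => by
        simpa only [eval_restrictToLine] using h (t • w)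
    _ ≤ p.totalDegree := natDegree_restrictToLine_le w p

theorem coeff_single_eq_zero_of_sq_eval_piSingle_le [DecidableEq σ] {q : MvPolynomial σ ℝ}
    {i : σ} {c : ℝ} (h : ∀ t, eval (Pi.single i t) q ^ 2 ≤ c) {n : ℕ} (hn : n ≠ 0) :
    coeff (Finsupp.single i n) q = 0 := by
  have hdeg : 2 * (restrictToLine (Pi.single i 1) q).natDegree ≤ (Polynomial.C c).natDegree :=
    Polynomial.two_mul_natDegree_le_of_sq_eval_le fun t => by
      simpa [eval_restrictToLine, ← Pi.single_smul] using h t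
  rw [Polynomial.natDegree_C] at hdeg
  rw [← eval_piSingle_one_homogeneousComponent, ← coeff_restrictToLine,
    Polynomial.coeff_eq_zero_of_natDegree_lt (by omega)]

theorem coeff_nonneg_of_isSumSq {p M : MvPolynomial σ ℝ} {m : σ →₀ ℕ}
    (hsq : ∀ q, (∀ z, eval z q ^ 2 ≤ eval z M) → 0 ≤ coeff m (q * q))
    (hp : IsSumSq p) (hpM : ∀ z, eval z p ≤ eval z M) : 0 ≤ coeff m p := by
  induction hp with
  | zero => simp
  | @sq_add a s hs ih =>
    have hs₀ (z : σ → ℝ) : 0 ≤ eval z s := (hs.map (eval z)).nonneg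
    simp only [eval_add, eval_mul] at hpM
    rw [coeff_add]
    exact add_nonneg (hsq a fun z => by nlinarith [hpM z, hs₀ z])
      (ih fun z => by nlinarith [hpM z, mul_self_nonneg (eval z a)])

end Real

end MvPolynomial

noncomputable def motzkin : MvPolynomial (Fin 2) ℝ :=
  1 + X 0 ^ 4 * X 1 ^ 2 + X 0 ^ 2 * X 1 ^ 4 - 3 * X 0 ^ 2 * X 1 ^ 2

theorem eval_motzkin_nonneg (x : Fin 2 → ℝ) : 0 ≤ eval x motzkin := by
  simp only [motzkin, map_add, map_sub, map_mul, map_pow, map_one, map_ofNat, eval_X]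
  nlinarith [sq_nonneg (x 0 * x 1), sq_nonneg (x 0 ^ 2 * x 1 ^ 2 - 1),
    sq_nonneg (x 0 ^ 2 - x 1 ^ 2)]

theorem eval_piSingle_motzkin (i : Fin 2) (t : ℝ) : eval (Pi.single i t) motzkin = 1 := by
  fin_cases i <;> simp [motzkin]

theorem totalDegree_motzkin_le : motzkin.totalDegree ≤ 6 := by
  have hmon (c : ℝ) (a b : ℕ) :
      (C c * X 0 ^ a * X 1 ^ b : MvPolynomial (Fin 2) ℝ).totalDegree ≤ a + b := by
    rw [mul_assoc, X_pow_eq_monomial, X_pow_eq_monomial, monomial_mul, C_mul_monomial]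
    refine (totalDegree_monomial_le _ _).trans_eq ?_
    change Finsupp.degree _ = _
    simp
  have h₀ := totalDegree_one (σ := Fin 2) (R := ℝ)
  have h₁ := hmon 1 4 2
  have h₂ := hmon 1 2 4
  have h₃ := hmon 3 2 2
  simp only [map_one, one_mul, map_ofNat] at h₁ h₂ h₃
  unfold motzkin
  refine (totalDegree_sub _ _).trans (max_le ((totalDegree_add _ _).trans
    (max_le ((totalDegree_add _ _).trans (max_le ?_ ?_)) ?_)) ?_) <;> omega

theorem coeff_motzkin : coeff (Finsupp.single 0 2 + Finsupp.single 1 2) motzkin = -3 := by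
  have h₃ : (3 : MvPolynomial (Fin 2) ℝ) = C 3 := rfl
  simp [motzkin, h₃, X_pow_eq_monomial, monomial_mul, coeff_monomial, C_mul_monomial, coeff_one,
    Finsupp.single_eq_single_iff, eq_comm (a := (0 : Fin 2 →₀ ℕ))]

-- The exponents allowed are the lattice points `(0,0), (1,1), (2,1), (1,2)`.
theorem exponent_of_mem_support_of_sq_eval_le_motzkin {q : MvPolynomial (Fin 2) ℝ}
    (h : ∀ z, eval z q ^ 2 ≤ eval z motzkin) {m : Fin 2 →₀ ℕ} (hm : m ∈ q.support) :
    m 0 + m 1 ≤ 3 ∧ (m 0 = 0 ↔ m 1 = 0) := by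
  have hdeg : m 0 + m 1 ≤ q.totalDegree := by
    simpa [Finsupp.sum_fintype, Fin.sum_univ_two] using le_totalDegree hm
  have hq := two_mul_totalDegree_le_of_sq_eval_le h
  have hM := totalDegree_motzkin_le
  have haxis (i : Fin 2) (hmi : m = Finsupp.single i (m i)) : m i = 0 := by
    by_contra hne
    rw [hmi] at hm
    exact mem_support_iff.mp hm (coeff_single_eq_zero_of_sq_eval_piSingle_le
      (fun t => (h _).trans (eval_piSingle_motzkin i t).le) hne)
  have h₀ := haxis 0
  have h₁ := haxis 1
  simp [Finsupp.ext_iff, Fin.forall_fin_two] at h₀ h₁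
  omega

theorem coeff_mul_self_of_sq_eval_le_motzkin {q : MvPolynomial (Fin 2) ℝ}
    (h : ∀ z, eval z q ^ 2 ≤ eval z motzkin) :
    coeff (Finsupp.single 0 2 + Finsupp.single 1 2) (q * q) =
      coeff (Finsupp.single 0 1 + Finsupp.single 1 1) q ^ 2 := by
  refine coeff_mul_self_eq_sq (by ext i; fin_cases i <;> simp) fun a ha b hb hab => ?_
  have ha' := exponent_of_mem_support_of_sq_eval_le_motzkin h ha
  have hb' := exponent_of_mem_support_of_sq_eval_le_motzkin h hb
  have hab' : a 0 + b 0 = 2 ∧ a 1 + b 1 = 2 := by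
    simpa [Finsupp.ext_iff, Fin.forall_fin_two] using hab
  simpa [Finsupp.ext_iff, Fin.forall_fin_two] using (by omega : a 0 = 1 ∧ a 1 = 1)

theorem not_isSumSq_motzkin : ¬ IsSumSq motzkin := fun h => by
  have := coeff_nonneg_of_isSumSq (m := Finsupp.single 0 2 + Finsupp.single 1 2)
    (fun q hq => (coeff_mul_self_of_sq_eval_le_motzkin hq).symm ▸ sq_nonneg _) h fun _ => le_rfl
  rw [coeff_motzkin] at this
  norm_num at this

/-- The dehomogenized Motzkin polynomial `1 + x₁⁴x₂² + x₁²x₂⁴ - 3x₁²x₂²` is nonnegative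
on `ℝ²` but is not a sum of squares of polynomials. -/
theorem motzkin_nonneg_not_sos :
    (∀ x : Fin 2 → ℝ, 0 ≤ eval x
      ((1 : MvPolynomial (Fin 2) ℝ) + (X 0)^4 * (X 1)^2 + (X 0)^2 * (X 1)^4
        - 3 * (X 0)^2 * (X 1)^2))
    ∧ ¬ IsSumSq ((1 : MvPolynomial (Fin 2) ℝ) + (X 0)^4 * (X 1)^2 + (X 0)^2 * (X 1)^4
        - 3 * (X 0)^2 * (X 1)^2) :=
  ⟨eval_motzkin_nonneg, not_isSumSq_motzkin⟩
end

section
/- The convex set S = {(x₁,x₂) ∈ ℝ² : x₁ ≥ 0, x₁² - x₂² - (x₁²+x₂²)² ≥ 0} (the convex branch of the lemniscate region) equals the projection onto (x₁,x₂) of the set of (x₁,x₂,u) such that [[x₁+u, x₂],[x₂, x₁-u]] ⪰ 0 and [[u, x₁, x₂],[x₁, 1, 0],[x₂, 0, 1]] ⪰ 0. -/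
/-!
The 2×2 condition says `|u| ≤ x₁` and `u² + x₂² ≤ x₁²`; by a Schur complement the 3×3 condition
says `x₁² + x₂² ≤ u`. Eliminating `u` (the witness is `u = x₁² + x₂²`) leaves exactly
`x₁ ≥ 0` and `(x₁² + x₂²)² ≤ x₁² - x₂²`.
-/

open Matrix

namespace Matrix

lemma posSemidef_fin_two_iff {a b c : ℝ} :
    (!![a, b; b, c] : Matrix (Fin 2) (Fin 2) ℝ).PosSemidef ↔ 0 ≤ a ∧ 0 ≤ c ∧ b ^ 2 ≤ a * c := by
  constructor
  · intro h
    have hdet := h.det_nonneg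
    rw [det_fin_two_of] at hdet
    exact ⟨h.diag_nonneg (i := 0), h.diag_nonneg (i := 1), by nlinarith⟩
  · rintro ⟨ha, hc, hb⟩
    refine .of_dotProduct_mulVec_nonneg ?_ fun v => ?_
    · ext i j
      fin_cases i <;> fin_cases j <;> rfl
    · have hq : star v ⬝ᵥ (!![a, b; b, c] *ᵥ v) = a * v 0 ^ 2 + 2 * b * v 0 * v 1 + c * v 1 ^ 2 := by
        simp [dotProduct, mulVec, Fin.sum_univ_succ]
        ring
      rw [hq]
      -- `a * q(v) = (a v₀ + b v₁)² + (a c - b²) v₁²`; when `a = 0` also `b = 0`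
      rcases ha.eq_or_lt with rfl | ha
      · obtain rfl : b = 0 := by nlinarith
        nlinarith [sq_nonneg (v 1)]
      · nlinarith [sq_nonneg (a * v 0 + b * v 1), mul_nonneg (sub_nonneg.2 hb) (sq_nonneg (v 1))]

lemma posSemidef_fin_three_iff {u x y : ℝ} :
    (!![u, x, y; x, 1, 0; y, 0, 1] : Matrix (Fin 3) (Fin 3) ℝ).PosSemidef ↔ x ^ 2 + y ^ 2 ≤ u := by
  have hq : ∀ v : Fin 3 → ℝ, star v ⬝ᵥ (!![u, x, y; x, 1, 0; y, 0, 1] *ᵥ v) =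
      (u - (x ^ 2 + y ^ 2)) * v 0 ^ 2 + (v 1 + x * v 0) ^ 2 + (v 2 + y * v 0) ^ 2 := fun v => by
    simp [dotProduct, mulVec, Fin.sum_univ_succ]
    ring
  constructor
  · intro h
    have := h.dotProduct_mulVec_nonneg ![1, -x, -y]
    rw [hq] at this
    simpa using this
  · intro h
    refine .of_dotProduct_mulVec_nonneg ?_ fun v => ?_
    · ext i j
      fin_cases i <;> fin_cases j <;> rfl
    · rw [hq]
      have := sub_nonneg.2 h
      positivity

end Matrix

/-- SDP representation of the convex branch of the lemniscate region
`{x₁ ≥ 0, x₁² - x₂² - (x₁²+x₂²)² ≥ 0}`. -/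
theorem sdp_representation_lemniscate :
    {p : ℝ × ℝ | p.1 ≥ 0 ∧ p.1^2 - p.2^2 - (p.1^2 + p.2^2)^2 ≥ 0}
      = {p : ℝ × ℝ | ∃ u : ℝ,
          (!![p.1 + u, p.2; p.2, p.1 - u] : Matrix (Fin 2) (Fin 2) ℝ).PosSemidef ∧
          (!![u, p.1, p.2; p.1, 1, 0; p.2, 0, 1] :
            Matrix (Fin 3) (Fin 3) ℝ).PosSemidef} := by
  ext ⟨x, y⟩
  simp only [Set.mem_ofPred_eq, posSemidef_fin_two_iff, posSemidef_fin_three_iff]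
  constructor
  · rintro ⟨hx, hd⟩
    -- `x² ≥ (x² + y²)²` forces `x ≥ x² + y²`
    have hux : x ^ 2 + y ^ 2 ≤ x := by
      nlinarith [sq_nonneg y, sq_nonneg (x ^ 2 + y ^ 2), sq_nonneg (x - (x ^ 2 + y ^ 2))]
    exact ⟨x ^ 2 + y ^ 2, ⟨by positivity, by linarith, by nlinarith⟩, le_rfl⟩
  · rintro ⟨u, ⟨hxu, hxu', hdet⟩, hu⟩
    have hsq : (x ^ 2 + y ^ 2) ^ 2 ≤ u ^ 2 := pow_le_pow_left₀ (by positivity) hu 2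
    exact ⟨by linarith, by nlinarith⟩
end
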